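/- For every nonnegative integer n, Σ_{k=0}^{n} (C(n,k)/(k+1)^2)·(−4/3)^k = 1/(n+1) + (3/(4(n+1)))·Σ_{k=1}^{n} 1/(k+1) + (1/(4(n+1)))·Σ_{k=1}^{n} 1/((k+1)·(−3)^k). -/

import Mathlib

/-!
Since `C(n,k)/(k+1) = C(n+1,k+1)/(n+1)`, the sum equals `1/((n+1)x)` times
`∑_{k=1}^{n+1} C(n+1,k) x^k/k` at `x = -4/3`. By Pascal's rule and induction,
`∑_{k=1}^m C(m,k) x^k/k = ∑_{j=1}^m ((1+x)^j - 1)/j` (both sides are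
`∫_0^x ((1+t)^m - 1)/t dt`), and `1 + x = -1/3` produces the powers of `-3`.
-/

open Finset

section

variable {K : Type*} [Field K] [CharZero K]

theorem Nat.cast_choose_div_add_one (n k : ℕ) :
    (n.choose k : K) / (k + 1) = (n + 1).choose (k + 1) / (n + 1) := by
  have h : ((n + 1 : ℕ) : K) * n.choose k = (n + 1).choose (k + 1) * (k + 1 : ℕ) := by
    exact_mod_cast Nat.add_one_mul_choose_eq n k
  push_cast at h
  field_simp
  linear_combination h

theorem sum_range_choose_mul_pow_succ_div (x : K) (m : ℕ) :
    ∑ k ∈ range (m + 1), (m.choose k : K) * x ^ (k + 1) / (k + 1) =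
      ((1 + x) ^ (m + 1) - 1) / (m + 1) := by
  have binomial : (1 + x) ^ (m + 1) =
      ∑ k ∈ range (m + 1), x ^ (k + 1) * ((m + 1).choose (k + 1) : K) + 1 := by
    rw [add_comm (1 : K), add_pow, sum_range_succ' _ (m + 1)]
    simp
  rw [binomial, add_sub_cancel_right, sum_div]
  refine sum_congr rfl fun k _ => ?_
  rw [mul_div_right_comm, Nat.cast_choose_div_add_one]
  ring

theorem sum_range_choose_succ_mul_pow_succ_div (x : K) (m : ℕ) :
    ∑ k ∈ range m, (m.choose (k + 1) : K) * x ^ (k + 1) / (k + 1) =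
      ∑ j ∈ range m, ((1 + x) ^ (j + 1) - 1) / (j + 1) := by
  induction m with
  | zero => simp
  | succ m ih =>
    have pascal : ∀ k ∈ range (m + 1), ((m + 1).choose (k + 1) : K) * x ^ (k + 1) / (k + 1) =
        m.choose k * x ^ (k + 1) / (k + 1) + m.choose (k + 1) * x ^ (k + 1) / (k + 1) := by
      intro k _
      rw [Nat.choose_succ_succ, Nat.cast_add]
      ring
    rw [sum_congr rfl pascal, sum_add_distrib, sum_range_choose_mul_pow_succ_div,
      sum_range_succ _ m, Nat.choose_succ_self, sum_range_succ _ m, ih]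
    push_cast
    ring

theorem sum_range_choose_div_sq_mul_pow {x : K} (hx : x ≠ 0) (n : ℕ) :
    ∑ k ∈ range (n + 1), (n.choose k : K) / (k + 1) ^ 2 * x ^ k =
      1 / ((n + 1) * x) * ∑ j ∈ range (n + 1), ((1 + x) ^ (j + 1) - 1) / (j + 1) := by
  rw [← sum_range_choose_succ_mul_pow_succ_div, mul_sum]
  refine sum_congr rfl fun k _ => ?_
  rw [sq, ← div_div, Nat.cast_choose_div_add_one]
  field_simp
  ring

end

theorem sum_choose_div_sq_neg_four_thirds (n : ℕ) :
    ∑ k ∈ Finset.range (n + 1), ((n.choose k : ℚ) / (k + 1) ^ 2) * (-4 / 3) ^ k =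
      1 / (n + 1) + 3 / (4 * (n + 1)) * ∑ k ∈ Finset.Icc 1 n, (1 : ℚ) / (k + 1) +
        1 / (4 * (n + 1)) * ∑ k ∈ Finset.Icc 1 n, (1 : ℚ) / ((k + 1) * (-3) ^ k) := by
  have term (k : ℕ) :
      1 / ((n + 1) * (-4 / 3 : ℚ)) * (((1 + -4 / 3 : ℚ) ^ (k + 1) - 1) / (k + 1)) =
      3 / (4 * (n + 1)) * (1 / (k + 1)) + 1 / (4 * (n + 1)) * (1 / ((k + 1) * (-3) ^ k)) := by
    rw [show (1 + -4 / 3 : ℚ) = (-3)⁻¹ by norm_num, inv_pow, pow_succ]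
    field_simp
    ring
  rw [sum_range_choose_div_sq_mul_pow (by norm_num), range_eq_Ico,
    sum_eq_sum_Ico_succ_bot (by omega), Ico_add_one_right_eq_Icc, mul_add, mul_sum,
    sum_congr rfl fun k _ => term k, sum_add_distrib, ← mul_sum, ← mul_sum]
  norm_num
  field_simp
  ring
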